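/- arXiv:math/0411267 — 3 statements merged into one kernel-verified Lean document; each statement's English description precedes it below -/
import Mathlib

section
/- For every complex number β not in {0, -1, -2, ...}, every integer q ≥ 0, and every integer s ≥ 2, one has ∑_{m=0}^{q} C(q,m) (-1)^m / (β + m)^s = (q! / (β)_{q+1}) · ∑_{0 ≤ i_1 ≤ ... ≤ i_{s-1} ≤ q} ∏_{r=1}^{s-1} 1/(β + i_r). -/
/-!
Write `A_n(q) = ∑_m C(q,m) (-1)^m / (β+m)^n` and let `h_t(q)` be the complete homogeneous
symmetric polynomial of degree `t` in `1/β, …, 1/(β+q)`, i.e. the sum over nondecreasing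
tuples in the statement. Since `(β+q+1) - (β+m) = q+1-m` and `C(q+1,m) (q+1-m) = (q+1) C(q,m)`,
the sums satisfy `(β+q+1) A_{n+1}(q+1) = (q+1) A_{n+1}(q) + A_n(q+1)`, with `A_0(q+1) = 0`.
Splitting off the tuples that end in `q+1` gives `h_{t+1}(q+1) = h_{t+1}(q) + h_t(q+1)/(β+q+1)`,
and these two recurrences match up under `A_{t+1}(q) = q!/(β)_{q+1} · h_t(q)`, which is then
proved by induction on `q` and, inside it, on `t`.
-/

open scoped Classical
open Finset

theorem Fin.monotone_snoc_last {t n : ℕ} {g : Fin t → Fin (n + 1)} (hg : Monotone g) :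
    Monotone (Fin.snoc g (Fin.last n) : Fin (t + 1) → Fin (n + 1)) := by
  intro i j hij
  induction j using Fin.lastCases with
  | last => simp [Fin.le_last]
  | cast j =>
    induction i using Fin.lastCases with
    | last => exact absurd hij (by simp)
    | cast i => simpa using hg (Fin.castSucc_le_castSucc_iff.mp hij)

/-- `h_t(x 0, …, x (n - 1))`: the second argument is the number of variables. -/
noncomputable def completeHomogeneous {R : Type*} [CommSemiring R] (x : ℕ → R) (t n : ℕ) : R :=
  ∑ f : Fin t → Fin n with Monotone f, ∏ r, x (f r)

section CompleteHomogeneous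

variable {R : Type*} [CommSemiring R] (x : ℕ → R)

@[simp] theorem completeHomogeneous_zero_left (n : ℕ) : completeHomogeneous x 0 n = 1 := by
  rw [completeHomogeneous, filter_true_of_mem fun f _ i => i.elim0]
  simp

@[simp] theorem completeHomogeneous_succ_zero (t : ℕ) : completeHomogeneous x (t + 1) 0 = 0 := by
  simp [completeHomogeneous]

theorem completeHomogeneous_succ_eq_sum_last_ne (t n : ℕ) :
    completeHomogeneous x (t + 1) n =
      ∑ f : Fin (t + 1) → Fin (n + 1) with Monotone f ∧ f (Fin.last t) ≠ Fin.last n,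
        ∏ r, x (f r) := by
  refine sum_bij (fun g _ => Fin.castSucc ∘ g) ?_ ?_ ?_ ?_
  · intro g hg
    simp only [mem_filter, mem_univ, true_and] at hg ⊢
    exact ⟨Fin.strictMono_castSucc.monotone.comp hg, (Fin.castSucc_lt_last _).ne⟩
  · intro g _ g' _ h
    funext r
    exact Fin.castSucc_injective _ (congrFun h r)
  · intro f hf
    simp only [mem_filter, mem_univ, true_and] at hf
    have hlt : ∀ r, f r ≠ Fin.last n := fun r =>
      ((hf.1 (Fin.le_last r)).trans_lt (Fin.lt_last_iff_ne_last.mpr hf.2)).ne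
    refine ⟨fun r => (f r).castPred (hlt r), ?_, ?_⟩
    · simp only [mem_filter, mem_univ, true_and]
      intro i j hij
      simpa [Fin.castPred_le_castPred_iff] using hf.1 hij
    · funext r
      simp
  · intro g _
    rfl

theorem mul_completeHomogeneous_eq_sum_last_eq (t n : ℕ) :
    x n * completeHomogeneous x t (n + 1) =
      ∑ f : Fin (t + 1) → Fin (n + 1) with Monotone f ∧ f (Fin.last t) = Fin.last n,
        ∏ r, x (f r) := by
  rw [completeHomogeneous, mul_sum]
  refine sum_nbij' (fun g => Fin.snoc g (Fin.last n)) Fin.init ?_ ?_ ?_ ?_ ?_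
  · intro g hg
    simp only [mem_filter, mem_univ, true_and] at hg ⊢
    exact ⟨Fin.monotone_snoc_last hg, by simp⟩
  · intro f hf
    simp only [mem_filter, mem_univ, true_and] at hf ⊢
    exact hf.1.comp Fin.strictMono_castSucc.monotone
  · intro g _
    simp
  · intro f hf
    simp only [mem_filter, mem_univ, true_and] at hf
    rw [← hf.2, Fin.snoc_init_self]
  · intro g _
    simp [Fin.prod_univ_castSucc, mul_comm]

theorem completeHomogeneous_succ_succ (t n : ℕ) :
    completeHomogeneous x (t + 1) (n + 1) =
      completeHomogeneous x (t + 1) n + x n * completeHomogeneous x t (n + 1) := by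
  rw [completeHomogeneous,
    ← sum_filter_add_sum_filter_not _ fun f => f (Fin.last t) ≠ Fin.last n, filter_filter,
    filter_filter]
  simp only [not_not]
  rw [completeHomogeneous_succ_eq_sum_last_ne, mul_completeHomogeneous_eq_sum_last_eq]

theorem completeHomogeneous_one_right (t : ℕ) : completeHomogeneous x t 1 = x 0 ^ t := by
  induction t with
  | zero => simp
  | succ t ih => rw [completeHomogeneous_succ_succ, ih, completeHomogeneous_succ_zero, zero_add,
      pow_succ']

end CompleteHomogeneous

noncomputable def alternatingBinomialSum {K : Type*} [Field K] (β : K) (n q : ℕ) : K :=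
  ∑ m ∈ range (q + 1), (q.choose m : K) * (-1) ^ m / (β + m) ^ n

section AlternatingBinomialSum

variable {K : Type*} [Field K] (β : K)

@[simp] theorem alternatingBinomialSum_zero_succ (q : ℕ) :
    alternatingBinomialSum β 0 (q + 1) = 0 := by
  have h := add_pow (-1 : K) 1 (q + 1)
  simp only [neg_add_cancel, one_pow, mul_one, ne_eq, Nat.add_one_ne_zero, not_false_eq_true,
    zero_pow] at h
  simp [alternatingBinomialSum, h, mul_comm]

theorem alternatingBinomialSum_zero_right (n : ℕ) :
    alternatingBinomialSum β n 0 = (β ^ n)⁻¹ := by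
  simp [alternatingBinomialSum]

theorem mul_alternatingBinomialSum_succ_succ (hβ : ∀ k : ℕ, β + k ≠ 0) (n q : ℕ) :
    (β + (q + 1 : ℕ)) * alternatingBinomialSum β (n + 1) (q + 1) =
      (q + 1) * alternatingBinomialSum β (n + 1) q + alternatingBinomialSum β n (q + 1) := by
  have hterm : ∀ m ∈ range (q + 2),
      (β + (q + 1 : ℕ)) * (((q + 1).choose m : K) * (-1) ^ m / (β + m) ^ (n + 1)) =
        (q + 1) * ((q.choose m : K) * (-1) ^ m / (β + m) ^ (n + 1)) +
          ((q + 1).choose m : K) * (-1) ^ m / (β + m) ^ n := by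
    intro m hm
    have hchoose : ((q + 1).choose m : K) * ((q + 1 : ℕ) - m : K) = q.choose m * (q + 1) := by
      rw [← Nat.cast_sub (by simpa [Nat.lt_succ_iff] using hm)]
      exact_mod_cast congrArg (Nat.cast : ℕ → K) (Nat.choose_mul_succ_eq q m).symm
    have hinv : (β + m) * (β + m)⁻¹ = 1 := mul_inv_cancel₀ (hβ m)
    simp only [div_eq_mul_inv, pow_succ, mul_inv]
    push_cast at hchoose ⊢
    linear_combination (-1) ^ m * ((β + m) ^ n)⁻¹ * (β + m)⁻¹ * hchoose +
      ((q + 1).choose m : K) * (-1) ^ m * ((β + m) ^ n)⁻¹ * hinv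
  rw [alternatingBinomialSum, mul_sum, sum_congr rfl hterm, sum_add_distrib, ← mul_sum,
    sum_range_succ _ (q + 1), Nat.choose_succ_self]
  simp [alternatingBinomialSum]

open Nat in
theorem alternatingBinomialSum_eq_completeHomogeneous (hβ : ∀ k : ℕ, β + k ≠ 0) (t q : ℕ) :
    alternatingBinomialSum β (t + 1) q =
      (q ! : K) / (∏ j ∈ range (q + 1), (β + j)) *
        completeHomogeneous (fun i => (β + i)⁻¹) t (q + 1) := by
  induction q generalizing t with
  | zero =>
    simp [alternatingBinomialSum_zero_right, completeHomogeneous_one_right, pow_succ, inv_pow]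
  | succ q ihq =>
    have hP : ∏ j ∈ range (q + 1), (β + j) ≠ 0 := prod_ne_zero_iff.mpr fun j _ => hβ j
    have hc := hβ (q + 1)
    have hrec := mul_alternatingBinomialSum_succ_succ β hβ
    rw [prod_range_succ, factorial_succ]
    induction t with
    | zero =>
      apply mul_left_cancel₀ hc
      rw [hrec, ihq, alternatingBinomialSum_zero_succ]
      simp only [completeHomogeneous_zero_left]
      field_simp
      push_cast
      ring
    | succ t iht =>
      apply mul_left_cancel₀ hc
      rw [hrec, ihq, iht, completeHomogeneous_succ_succ _ t (q + 1)]
      field_simp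
      push_cast
      ring

end AlternatingBinomialSum

/-- For β ∉ {0,-1,-2,...}, q ≥ 0 and s ≥ 2,
    ∑_{m=0}^q C(q,m)(-1)^m/(β+m)^s
      = (q!/(β)_{q+1}) ∑_{0 ≤ i₁ ≤ ... ≤ i_{s-1} ≤ q} ∏_r 1/(β+i_r). -/
theorem alternating_binomial_sum_multiple_harmonic
    (β : ℂ) (hβ : ∀ k : ℕ, β ≠ -(k : ℂ)) (q : ℕ) (s : ℕ) (hs : 2 ≤ s) :
    ∑ m ∈ Finset.range (q + 1), (Nat.choose q m : ℂ) * (-1) ^ m / (β + m) ^ s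
      = (Nat.factorial q : ℂ) / (∏ j ∈ Finset.range (q + 1), (β + j)) *
        ∑ f ∈ Finset.univ.filter (fun f : Fin (s - 1) → Fin (q + 1) => Monotone f),
          ∏ r, (β + ((f r : ℕ) : ℂ))⁻¹ := by
  obtain ⟨t, rfl⟩ : ∃ t, s = t + 1 := ⟨s - 1, by omega⟩
  exact alternatingBinomialSum_eq_completeHomogeneous β
    (fun k h => hβ k (eq_neg_of_add_eq_zero_left h)) t q
end

section
/- For every integer t ≥ 0, every integer q ≥ 0, and complex β avoiding nonpositive integers, with f_n = 1/(β+n) and S_a^b as above: ∑_{v=0}^{t} S_1^q(v) (f_0^{t-v+1} − f_{q+1}^{t-v+1}) = (f_0 − f_{q+1}) · S_0^{q+1}(t) = ((q+1)/(β(β+q+1))) · S_0^{q+1}(t). -/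
open scoped Classical

noncomputable section

/-- S_a^b(t) = ∑_{a ≤ i₁ ≤ ... ≤ i_t ≤ b} ∏_r 1/(β + i_r), with S_a^b(0) = 1. -/
def S (β : ℂ) (a b t : ℕ) : ℂ :=
  ∑ f ∈ Finset.univ.filter
      (fun f : Fin t → {x // x ∈ Finset.Icc a b} => Monotone f),
    ∏ r, (β + ((f r : ℕ) : ℂ))⁻¹

/-!
`S β a b t` is the complete homogeneous symmetric polynomial of degree `t` in `f_a, …, f_b`, so its
generating series `G_a^b = ∑ₜ S_a^b(t) Xᵗ` is `∏_{i=a}^{b} (1 - f_i X)⁻¹`. Peeling off the smallest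
or the largest index gives `(1 - f_0 X) G_0^{q+1} = G_1^{q+1}` and `(1 - f_{q+1} X) G_1^{q+1} = G_1^q`.
With `x = f_0`, `y = f_{q+1}` one has `(1 - xX)(1 - yX) ∑ₘ (x^{m+1} - y^{m+1}) Xᵐ = x - y`, hence
`G_1^q · ∑ₘ (x^{m+1} - y^{m+1}) Xᵐ = (x - y) G_0^{q+1}`; the coefficient of `Xᵗ` is the identity.
-/

namespace Fin

variable {α : Type*} [Preorder α] {n : ℕ}

theorem monotone_cons {a : α} {g : Fin n → α} (hg : Monotone g) (ha : ∀ i, a ≤ g i) :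
    Monotone (Fin.cons a g : Fin (n + 1) → α) := by
  intro i j hij
  cases i using Fin.cases <;> cases j using Fin.cases
  · exact le_rfl
  · simpa using ha _
  · exact absurd hij (by simp)
  · simpa using hg (Fin.succ_le_succ_iff.mp hij)

theorem monotone_snoc {c : α} {g : Fin n → α} (hg : Monotone g) (hc : ∀ i, g i ≤ c) :
    Monotone (Fin.snoc g c : Fin (n + 1) → α) := by
  intro i j hij
  cases j using Fin.lastCases <;> cases i using Fin.lastCases
  · exact le_rfl
  · simpa using hc _
  · exact absurd hij (by simp)
  · simpa using hg (Fin.castSucc_le_castSucc_iff.mp hij)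

end Fin

open Finset

def monotoneTuples (a b t : ℕ) : Finset (Fin t → ℕ) :=
  {f ∈ Fintype.piFinset fun _ ↦ Icc a b | Monotone f}

theorem mem_monotoneTuples {a b t : ℕ} {f : Fin t → ℕ} :
    f ∈ monotoneTuples a b t ↔ (∀ r, a ≤ f r ∧ f r ≤ b) ∧ Monotone f := by
  simp [monotoneTuples]

theorem S_eq_sum_monotoneTuples (β : ℂ) (a b t : ℕ) :
    S β a b t = ∑ f ∈ monotoneTuples a b t, ∏ r, (β + f r)⁻¹ := by
  refine sum_bij (fun f _ r ↦ f r) (fun f hf ↦ ?_) (fun f _ g _ hfg ↦ ?_) (fun g hg ↦ ?_)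
    (fun _ _ ↦ rfl)
  · simp only [mem_filter, mem_univ, true_and] at hf
    exact mem_monotoneTuples.2 ⟨fun r ↦ mem_Icc.1 (f r).2, fun i j hij ↦ hf hij⟩
  · funext r
    exact Subtype.ext (congrFun hfg r)
  · obtain ⟨hmem, hmono⟩ := mem_monotoneTuples.1 hg
    exact ⟨fun r ↦ ⟨g r, mem_Icc.2 (hmem r)⟩,
      mem_filter.2 ⟨mem_univ _, fun i j hij ↦ Subtype.mk_le_mk.2 (hmono hij)⟩, rfl⟩

section Tuples

variable {M : Type*} [AddCommMonoid M]

theorem sum_monotoneTuples_succ_left {a b : ℕ} (hab : a ≤ b) (t : ℕ)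
    (F : (Fin (t + 1) → ℕ) → M) :
    ∑ f ∈ monotoneTuples a b (t + 1), F f
      = ∑ g ∈ monotoneTuples a b t, F (Fin.cons a g : Fin (t + 1) → ℕ)
        + ∑ f ∈ monotoneTuples (a + 1) b (t + 1), F f := by
  rw [← sum_filter_add_sum_filter_not (monotoneTuples a b (t + 1)) (fun f ↦ f 0 = a) F]
  congr 1
  · symm
    refine sum_nbij' (fun g ↦ Fin.cons a g) (fun f ↦ Fin.tail f) (fun g hg ↦ ?_) (fun f hf ↦ ?_)
      (fun g _ ↦ Fin.tail_cons _ _) (fun f hf ↦ ?_) (fun _ _ ↦ rfl)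
    · obtain ⟨hmem, hmono⟩ := mem_monotoneTuples.1 hg
      refine mem_filter.2 ⟨mem_monotoneTuples.2 ⟨Fin.cases ⟨le_rfl, hab⟩ hmem, ?_⟩, rfl⟩
      exact Fin.monotone_cons hmono fun r ↦ (hmem r).1
    · obtain ⟨hmem, hmono⟩ := mem_monotoneTuples.1 (mem_filter.1 hf).1
      exact mem_monotoneTuples.2 ⟨fun r ↦ hmem r.succ, hmono.comp Fin.strictMono_succ.monotone⟩
    · simpa [(mem_filter.1 hf).2] using Fin.cons_self_tail f
  · refine congrArg (Finset.sum · F) (ext fun f ↦ ?_)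
    simp only [mem_filter, mem_monotoneTuples]
    constructor
    · rintro ⟨⟨hmem, hmono⟩, hf₀⟩
      refine ⟨fun r ↦ ⟨?_, (hmem r).2⟩, hmono⟩
      have := hmono (Fin.zero_le r)
      have := (hmem 0).1
      omega
    · rintro ⟨hmem, hmono⟩
      refine ⟨⟨fun r ↦ ⟨by linarith [(hmem r).1], (hmem r).2⟩, hmono⟩, ?_⟩
      have := (hmem 0).1
      omega

theorem sum_monotoneTuples_succ_right {a b : ℕ} (hab : a ≤ b + 1) (t : ℕ)
    (F : (Fin (t + 1) → ℕ) → M) :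
    ∑ f ∈ monotoneTuples a (b + 1) (t + 1), F f
      = ∑ g ∈ monotoneTuples a (b + 1) t, F (Fin.snoc g (b + 1) : Fin (t + 1) → ℕ)
        + ∑ f ∈ monotoneTuples a b (t + 1), F f := by
  rw [← sum_filter_add_sum_filter_not (monotoneTuples a (b + 1) (t + 1))
    (fun f ↦ f (Fin.last t) = b + 1) F]
  congr 1
  · symm
    refine sum_nbij' (fun g ↦ Fin.snoc g (b + 1)) (fun f ↦ Fin.init f) (fun g hg ↦ ?_)
      (fun f hf ↦ ?_) (fun g _ ↦ Fin.init_snoc _ _) (fun f hf ↦ ?_) (fun _ _ ↦ rfl)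
    · obtain ⟨hmem, hmono⟩ := mem_monotoneTuples.1 hg
      refine mem_filter.2 ⟨mem_monotoneTuples.2 ⟨Fin.lastCases ?_ ?_, ?_⟩, by simp⟩
      · exact Fin.monotone_snoc hmono fun r ↦ (hmem r).2
      · simpa using hab
      · simpa using hmem
    · obtain ⟨hmem, hmono⟩ := mem_monotoneTuples.1 (mem_filter.1 hf).1
      exact mem_monotoneTuples.2
        ⟨fun r ↦ hmem r.castSucc, hmono.comp Fin.strictMono_castSucc.monotone⟩
    · simpa [(mem_filter.1 hf).2] using Fin.snoc_init_self f
  · refine congrArg (Finset.sum · F) (ext fun f ↦ ?_)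
    simp only [mem_filter, mem_monotoneTuples]
    constructor
    · rintro ⟨⟨hmem, hmono⟩, hf_last⟩
      refine ⟨fun r ↦ ⟨(hmem r).1, ?_⟩, hmono⟩
      have := hmono (Fin.le_last r)
      have := (hmem (Fin.last t)).2
      omega
    · rintro ⟨hmem, hmono⟩
      refine ⟨⟨fun r ↦ ⟨(hmem r).1, by linarith [(hmem r).2]⟩, hmono⟩, ?_⟩
      have := (hmem (Fin.last t)).2
      omega

end Tuples

theorem S_zero (β : ℂ) (a b : ℕ) : S β a b 0 = 1 := by
  simp [S_eq_sum_monotoneTuples, monotoneTuples, Subsingleton.monotone]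

theorem S_succ_left (β : ℂ) {a b : ℕ} (hab : a ≤ b) (t : ℕ) :
    S β a b (t + 1) = (β + a)⁻¹ * S β a b t + S β (a + 1) b (t + 1) := by
  simp only [S_eq_sum_monotoneTuples, sum_monotoneTuples_succ_left hab, mul_sum,
    Fin.prod_univ_succ, Fin.cons_zero, Fin.cons_succ]

theorem S_succ_right (β : ℂ) {a b : ℕ} (hab : a ≤ b + 1) (t : ℕ) :
    S β a (b + 1) (t + 1) = (β + (b + 1 : ℕ))⁻¹ * S β a (b + 1) t + S β a b (t + 1) := by
  simp only [S_eq_sum_monotoneTuples, sum_monotoneTuples_succ_right hab, mul_sum,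
    Fin.prod_univ_castSucc, Fin.snoc_castSucc, Fin.snoc_last, mul_comm]

namespace PowerSeries

variable {R : Type*} [CommRing R]

theorem one_sub_C_mul_X_mul_mk_eq (c : R) (g : ℕ → R) (h : R⟦X⟧) (h₀ : g 0 = coeff 0 h)
    (hsucc : ∀ n, g (n + 1) = c * g n + coeff (n + 1) h) :
    (1 - C c * X) * mk g = h := by
  ext (_ | n)
  · simp [sub_mul, mul_assoc, h₀]
  · simp [sub_mul, mul_assoc, hsucc, coeff_C_mul]

theorem one_sub_C_mul_X_mul_mk_pow_succ (c : R) :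
    (1 - C c * X) * mk (fun n ↦ c ^ (n + 1)) = C c :=
  one_sub_C_mul_X_mul_mk_eq c _ _ (by simp) fun n ↦ by simp [pow_succ']

end PowerSeries

open PowerSeries

theorem one_sub_C_mul_X_mul_mk_S_left (β : ℂ) {a b : ℕ} (hab : a ≤ b) :
    (1 - C (β + a)⁻¹ * X : ℂ⟦X⟧) * mk (S β a b) = mk (S β (a + 1) b) :=
  one_sub_C_mul_X_mul_mk_eq _ _ _ (by simp [S_zero]) fun t ↦ by
    rw [coeff_mk, S_succ_left β hab]

theorem one_sub_C_mul_X_mul_mk_S_right (β : ℂ) {a b : ℕ} (hab : a ≤ b + 1) :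
    (1 - C (β + (b + 1 : ℕ))⁻¹ * X : ℂ⟦X⟧) * mk (S β a (b + 1)) = mk (S β a b) :=
  one_sub_C_mul_X_mul_mk_eq _ _ _ (by simp [S_zero]) fun t ↦ by
    rw [coeff_mk, S_succ_right β hab]

/-- With f_n = 1/(β+n):
    ∑_{v=0}^t S_1^q(v)(f_0^{t-v+1} - f_{q+1}^{t-v+1})
      = (f_0 - f_{q+1}) S_0^{q+1}(t) = ((q+1)/(β(β+q+1))) S_0^{q+1}(t). -/
theorem telescoping_identity
    (β : ℂ) (hβ : ∀ k : ℕ, β ≠ -(k : ℂ)) (t q : ℕ) :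
    (∑ v ∈ Finset.range (t + 1),
        S β 1 q v * (β⁻¹ ^ (t - v + 1) - (β + ((q + 1 : ℕ) : ℂ))⁻¹ ^ (t - v + 1)))
      = (β⁻¹ - (β + ((q + 1 : ℕ) : ℂ))⁻¹) * S β 0 (q + 1) t ∧
    (∑ v ∈ Finset.range (t + 1),
        S β 1 q v * (β⁻¹ ^ (t - v + 1) - (β + ((q + 1 : ℕ) : ℂ))⁻¹ ^ (t - v + 1)))
      = (((q : ℂ) + 1) / (β * (β + ((q : ℂ) + 1)))) * S β 0 (q + 1) t := by
  set x := β⁻¹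
  set y := (β + ((q + 1 : ℕ) : ℂ))⁻¹
  have hx : (1 - C x * X : ℂ⟦X⟧) * mk (S β 0 (q + 1)) = mk (S β 1 (q + 1)) := by
    simpa [x] using one_sub_C_mul_X_mul_mk_S_left β (Nat.zero_le (q + 1))
  have hy := one_sub_C_mul_X_mul_mk_S_right β (Nat.le_add_left 1 q)
  have hseries : mk (S β 1 q) * mk (fun n ↦ x ^ (n + 1) - y ^ (n + 1))
      = C (x - y) * mk (S β 0 (q + 1)) := by
    have hsub : mk (fun n ↦ x ^ (n + 1) - y ^ (n + 1)) =
        mk (fun n ↦ x ^ (n + 1)) - mk (fun n ↦ y ^ (n + 1)) := by ext; simp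
    rw [hsub, ← hy, ← hx, map_sub]
    linear_combination (1 - C y * X) * mk (S β 0 (q + 1)) * one_sub_C_mul_X_mul_mk_pow_succ x
      - (1 - C x * X) * mk (S β 0 (q + 1)) * one_sub_C_mul_X_mul_mk_pow_succ y
  have hcoeff := congrArg (coeff t) hseries
  rw [coeff_mul, Finset.Nat.sum_antidiagonal_eq_sum_range_succ
    (fun i j ↦ coeff i (mk (S β 1 q)) * coeff j (mk fun n ↦ x ^ (n + 1) - y ^ (n + 1))),
    coeff_C_mul] at hcoeff
  simp only [coeff_mk] at hcoeff
  refine ⟨hcoeff, hcoeff.trans ?_⟩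
  have h0 : β ≠ 0 := by simpa using hβ 0
  have h1 : β + ((q : ℂ) + 1) ≠ 0 := fun h ↦ hβ (q + 1) (by push_cast; linear_combination h)
  simp only [x, y]
  push_cast
  field_simp
  ring

end
end

section
/- For every complex α not in {−1, −2, ...}, integer s ≥ 1, and integer p ≥ 1: ∑_{n=1}^{p} C(p−1, n−1) (−1)^n/(α+n)^s = −((p−1)!/(α+1)_p) · ∑_{1 ≤ i_1 ≤ ... ≤ i_{s−1} ≤ p} ∏_{r=1}^{s−1} 1/(α + i_r), where the empty sum-product (s = 1) is interpreted as 1. -/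
/-!
Put `β = α + 1`, `x m = 1 / (β + m)` and `T_s(q) = ∑_{m ≤ q} (-1)^m C(q, m) x m ^ s`, so that the
left-hand side is `-T_s(p - 1)`. Termwise, `(q + 1) C(q, m) = (q + 1 - m) C(q + 1, m)` gives the
recurrence `(β + q + 1) T_{s+1}(q + 1) = (q + 1) T_{s+1}(q) + T_s(q + 1)`, while `T_0(q + 1) = 0`.
The right-hand side `q! / (β (β + 1) ⋯ (β + q)) · h_{s-1}(x 0, …, x q)` satisfies the same
recurrence, because splitting off the tuples whose largest index is `q + 1` gives
`h_t(x 0, …, x (q + 1)) = h_t(x 0, …, x q) + x (q + 1) h_{t-1}(x 0, …, x (q + 1))`.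
Induction on `s` and then on `q` concludes.
-/

open scoped Classical
open Finset Nat

section CompleteHomogeneous

variable {R : Type*} [CommSemiring R]

/-- `completeHomogeneousSum x t n = h_t(x 0, …, x (n - 1))`. -/
noncomputable def completeHomogeneousSum (x : ℕ → R) (t n : ℕ) : R :=
  ∑ f ∈ univ.filter (fun f : Fin t → Fin n => Monotone f), ∏ r, x (f r)

@[simp]
lemma completeHomogeneousSum_zero_left (x : ℕ → R) (n : ℕ) : completeHomogeneousSum x 0 n = 1 := by
  simp [completeHomogeneousSum, Subsingleton.monotone]

@[simp]
lemma completeHomogeneousSum_succ_zero (x : ℕ → R) (t : ℕ) :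
    completeHomogeneousSum x (t + 1) 0 = 0 := by
  simp [completeHomogeneousSum]

lemma Fin.monotone_snoc_top {α : Type*} [Preorder α] [OrderTop α] {t : ℕ} {g : Fin t → α}
    (hg : Monotone g) : Monotone (Fin.snoc g ⊤ : Fin (t + 1) → α) := by
  intro i j hij
  cases j using Fin.lastCases with
  | last => simp
  | cast j =>
    cases i using Fin.lastCases with
    | last => exact absurd hij (Fin.castSucc_lt_last j).not_ge
    | cast i => simpa using hg (Fin.castSucc_le_castSucc_iff.1 hij)

lemma completeHomogeneousSum_succ_succ (x : ℕ → R) (t n : ℕ) :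
    completeHomogeneousSum x (t + 1) (n + 1)
      = completeHomogeneousSum x (t + 1) n + x n * completeHomogeneousSum x t (n + 1) := by
  unfold completeHomogeneousSum
  rw [← sum_filter_add_sum_filter_not _ (fun f => f (Fin.last t) = Fin.last n), add_comm,
    mul_sum]
  congr 1
  · refine (sum_nbij (Fin.castSucc ∘ ·) ?_ ?_ ?_ ?_).symm
    · intro g hg
      simp only [mem_filter, mem_univ, true_and] at hg ⊢
      exact ⟨Fin.strictMono_castSucc.monotone.comp hg, (Fin.castSucc_lt_last _).ne⟩
    · intro g _ g' _ h
      funext r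
      exact Fin.castSucc_injective _ (congrFun h r)
    · intro f hf
      obtain ⟨hmono, hlast⟩ : Monotone f ∧ f (Fin.last t) ≠ Fin.last n := by simpa using hf
      have hlt : ∀ r, f r ≠ Fin.last n := fun r =>
        ((hmono (Fin.le_last r)).trans_lt (Fin.lt_last_iff_ne_last.2 hlast)).ne
      refine ⟨fun r => (f r).castPred (hlt r), ?_, funext fun r => Fin.castSucc_castPred _ _⟩
      simpa using Fin.monotone_castPred_comp hlt hmono
    · intro g _
      rfl
  · refine sum_nbij' Fin.init (fun g => Fin.snoc g (Fin.last n)) ?_ ?_ ?_ ?_ ?_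
    · intro f hf
      simp only [mem_filter, mem_univ, true_and] at hf ⊢
      exact hf.1.comp Fin.strictMono_castSucc.monotone
    · intro g hg
      simp only [mem_filter, mem_univ, true_and] at hg ⊢
      exact ⟨Fin.top_eq_last n ▸ Fin.monotone_snoc_top hg, Fin.snoc_last _ _⟩
    · intro f hf
      simp only [mem_filter, mem_univ, true_and] at hf
      rw [← hf.2, Fin.snoc_init_self]
    · intro g _
      exact Fin.init_snoc _ _
    · intro f hf
      simp only [mem_filter, mem_univ, true_and] at hf
      simp [Fin.prod_univ_castSucc, Fin.init, hf.2, mul_comm]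

end CompleteHomogeneous

section BinomialTransform

variable {R : Type*} [CommRing R]

def binomialTransform (g : ℕ → R) (q : ℕ) : R :=
  ∑ m ∈ range (q + 1), (-1) ^ m * (q.choose m : R) * g m

@[simp]
lemma binomialTransform_zero (g : ℕ → R) : binomialTransform g 0 = g 0 := by
  simp [binomialTransform]

lemma binomialTransform_one_succ (q : ℕ) : binomialTransform (1 : ℕ → R) (q + 1) = 0 := by
  simpa [binomialTransform] using
    congrArg (Int.cast : ℤ → R) (Int.alternating_sum_range_choose_of_ne q.succ_ne_zero)

variable {K : Type*} [Field K] {β : K}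

lemma binomialTransform_mul_inv_succ (hβ : ∀ m : ℕ, β + m ≠ 0) (g : ℕ → K) (q : ℕ) :
    (β + (q + 1)) * binomialTransform (fun m => g m * (β + m)⁻¹) (q + 1)
      = (q + 1) * binomialTransform (fun m => g m * (β + m)⁻¹) q + binomialTransform g (q + 1) := by
  have hextend : binomialTransform (fun m => g m * (β + m)⁻¹) q
      = ∑ m ∈ range (q + 2), (-1) ^ m * (q.choose m : K) * (g m * (β + m)⁻¹) := by
    rw [binomialTransform, sum_range_succ _ (q + 1), choose_succ_self, cast_zero]
    ring
  rw [hextend, binomialTransform, binomialTransform, mul_sum, mul_sum, ← sum_add_distrib]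
  refine sum_congr rfl fun m hm => ?_
  have hmq : m ≤ q + 1 := Nat.lt_succ_iff.1 (mem_range.1 hm)
  have hchoose := congrArg (Nat.cast : ℕ → K) (choose_mul_succ_eq q m)
  push_cast [Nat.cast_sub hmq] at hchoose
  have hinv : (β + m) * (β + m)⁻¹ = 1 := mul_inv_cancel₀ (hβ m)
  linear_combination (-1) ^ m * ((q + 1).choose m : K) * g m * hinv
    - (-1) ^ m * g m * (β + m)⁻¹ * hchoose

lemma binomialTransform_inv_add (hβ : ∀ m : ℕ, β + m ≠ 0) (q : ℕ) :
    binomialTransform (fun m => (β + m)⁻¹) q = q ! / ∏ j ∈ range (q + 1), (β + j) := by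
  induction q with
  | zero => simp
  | succ q ih =>
    have hrec := binomialTransform_mul_inv_succ hβ 1 q
    simp only [Pi.one_apply, one_mul, binomialTransform_one_succ, add_zero, ih] at hrec
    have hq := hβ (q + 1)
    have hprod := prod_ne_zero_iff.2 fun j (_ : j ∈ range (q + 1)) => hβ j
    push_cast at hq hrec
    apply mul_left_cancel₀ hq
    rw [hrec, prod_range_succ _ (q + 1), factorial_succ]
    push_cast
    field_simp

theorem binomialTransform_inv_add_pow_succ (hβ : ∀ m : ℕ, β + m ≠ 0) (t q : ℕ) :
    binomialTransform (fun m => ((β + m) ^ (t + 1))⁻¹) q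
      = q ! / (∏ j ∈ range (q + 1), (β + j))
          * completeHomogeneousSum (fun m => (β + m)⁻¹) t (q + 1) := by
  induction t generalizing q with
  | zero => simpa using binomialTransform_inv_add hβ q
  | succ t iht =>
    induction q with
    | zero =>
      have h0 := iht 0
      simp only [binomialTransform_zero, cast_zero, add_zero, factorial_zero, cast_one,
        zero_add, prod_range_one] at h0 ⊢
      rw [completeHomogeneousSum_succ_succ, completeHomogeneousSum_succ_zero, cast_zero, add_zero,
        pow_succ, mul_inv, h0]
      ring
    | succ q ihq =>
      have hrec := binomialTransform_mul_inv_succ hβ (fun m => ((β + m) ^ (t + 1))⁻¹) q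
      simp only [← mul_inv, ← pow_succ] at hrec
      rw [ihq, iht (q + 1)] at hrec
      have hq := hβ (q + 1)
      have hprod := prod_ne_zero_iff.2 fun j (_ : j ∈ range (q + 1)) => hβ j
      push_cast at hq hrec
      apply mul_left_cancel₀ hq
      rw [hrec, completeHomogeneousSum_succ_succ _ t (q + 1), prod_range_succ _ (q + 1),
        factorial_succ]
      push_cast
      field_simp

end BinomialTransform

/-- For α ∉ {-1,-2,...}, s ≥ 1 and p ≥ 1:
    ∑_{n=1}^p C(p-1,n-1)(-1)^n/(α+n)^s
      = -((p-1)!/(α+1)_p) ∑_{1≤i₁≤...≤i_{s-1}≤p} ∏_r 1/(α+i_r). -/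
theorem binomial_sum_eq_multiple_harmonic
    (α : ℂ) (hα : ∀ k : ℕ, α ≠ -(k + 1 : ℂ)) (s : ℕ) (hs : 1 ≤ s) (p : ℕ) (hp : 1 ≤ p) :
    ∑ n ∈ Finset.Icc 1 p, (Nat.choose (p - 1) (n - 1) : ℂ) * (-1) ^ n / (α + n) ^ s
      = -((Nat.factorial (p - 1) : ℂ) / (∏ j ∈ Finset.range p, (α + (j + 1)))) *
          ∑ f ∈ Finset.univ.filter (fun f : Fin (s - 1) → Fin p => Monotone f),
            ∏ r, (α + (((f r : ℕ) + 1 : ℕ) : ℂ))⁻¹ := by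
  obtain ⟨t, rfl⟩ : ∃ t, s = t + 1 := ⟨s - 1, by omega⟩
  obtain ⟨q, rfl⟩ : ∃ q, p = q + 1 := ⟨p - 1, by omega⟩
  have hβ : ∀ m : ℕ, α + 1 + m ≠ 0 := fun m h => hα m (by linear_combination h)
  have htransform := binomialTransform_inv_add_pow_succ hβ t q
  rw [← Ico_add_one_right_eq_Icc, sum_Ico_eq_sum_range, Nat.add_sub_cancel, Nat.add_sub_cancel,
    Nat.add_sub_cancel]
  calc _ = -binomialTransform (fun m => ((α + 1 + m) ^ (t + 1))⁻¹) q := by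
        rw [binomialTransform, ← sum_neg_distrib]
        refine sum_congr rfl fun m _ => ?_
        rw [add_tsub_cancel_left, pow_add, add_comm 1 m]
        push_cast
        ring
    _ = _ := by
        rw [htransform, completeHomogeneousSum]
        push_cast
        simp only [add_right_comm α 1, add_assoc]
        ring
end
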